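/- There exists an assignment x : {1,2,3,4,5} → ℝ of real numbers such that the unit interval graph on x — distinct u, v adjacent iff |x(u) − x(v)| ≤ 2 — is isomorphic to the Bull Graph, the simple graph on five vertices {1,2,3,4,5} with edge set {12, 13, 23, 14, 25}. Consequently, there is a unit interval graph that admits no conflict-free 1-coloring. -/

import Mathlib

/-! With a single color, a conflict-free coloring is exactly a set of colored vertices meeting
every closed neighborhood in exactly one vertex (a perfect code). In the bull graph the triangle
`0, 1, 2` must contain exactly one such vertex, and whichever it is, one of the pendant vertices
`3, 4` is left with either no colored vertex or two of them in its closed neighborhood. The bull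
graph itself is the unit interval graph on the points `0, 2, 1, -2, 4`. -/

/-- Uncolored vertices get `none`. -/
def IsCFColoring {V : Type*} (G : SimpleGraph V) {k : ℕ} (χ : V → Option (Fin k)) : Prop :=
  ∀ v : V, ∃ u ∈ insert v (G.neighborSet v), (χ u).isSome ∧
    ∀ w ∈ insert v (G.neighborSet v), χ w = χ u → w = u

def HasCFColoring {V : Type*} (G : SimpleGraph V) (k : ℕ) : Prop :=
  ∃ χ : V → Option (Fin k), IsCFColoring G χ

def unitIntervalGraph {V : Type*} (x : V → ℝ) : SimpleGraph V where
  Adj u v := u ≠ v ∧ |x u - x v| ≤ 2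
  symm := by
    constructor
    intro u v ⟨h1, h2⟩
    exact ⟨h1.symm, by rwa [abs_sub_comm]⟩
  loopless := by
    constructor
    intro v ⟨h1, _⟩
    exact h1 rfl

/-- The paper's vertices `1, …, 5` are `0, …, 4` here. -/
def bullGraph : SimpleGraph (Fin 5) :=
  SimpleGraph.fromRel (fun u v =>
    (u = 0 ∧ v = 1) ∨ (u = 0 ∧ v = 2) ∨ (u = 1 ∧ v = 2) ∨ (u = 0 ∧ v = 3) ∨ (u = 1 ∧ v = 4))

open SimpleGraph

theorem IsCFColoring.exists_colored_unique {V : Type*} {G : SimpleGraph V}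
    {χ : V → Option (Fin 1)} (hχ : IsCFColoring G χ) (v : V) :
    ∃ u ∈ insert v (G.neighborSet v), (χ u).isSome ∧
      ∀ w ∈ insert v (G.neighborSet v), (χ w).isSome → w = u := by
  obtain ⟨u, hu, hcol, huniq⟩ := hχ v
  refine ⟨u, hu, hcol, fun w hw hwcol => huniq w hw ?_⟩
  rw [Option.isSome_iff_exists] at hcol hwcol
  obtain ⟨a, ha⟩ := hcol
  obtain ⟨b, hb⟩ := hwcol
  rw [ha, hb, Subsingleton.elim a b]

theorem bullGraph_not_hasCFColoring_one : ¬ HasCFColoring bullGraph 1 := by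
  rintro ⟨χ, hχ⟩
  have not_both (v a b : Fin 5) (hca : (χ a).isSome) (hcb : (χ b).isSome)
      (hab : a ≠ b := by decide)
      (ha : a ∈ insert v (bullGraph.neighborSet v) := by simp [bullGraph])
      (hb : b ∈ insert v (bullGraph.neighborSet v) := by simp [bullGraph]) : False := by
    obtain ⟨c, -, -, hc⟩ := hχ.exists_colored_unique v
    exact hab ((hc a ha hca).trans (hc b hb hcb).symm)
  obtain ⟨u, hu, hcu, -⟩ := hχ.exists_colored_unique 2
  obtain ⟨w3, hw3, hc3, -⟩ := hχ.exists_colored_unique 3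
  obtain ⟨w4, hw4, hc4, -⟩ := hχ.exists_colored_unique 4
  simp only [bullGraph, Set.mem_insert_iff, mem_neighborSet, fromRel_adj, ne_eq, Fin.isValue,
    Fin.reduceEq, false_and, or_self, and_false, and_true, or_false, false_or] at hu hw3 hw4
  rcases hu with rfl | ⟨-, rfl | rfl⟩
  · rcases hw3 with rfl | ⟨-, rfl⟩
    · exact not_both 0 2 3 hcu hc3
    · exact not_both 2 2 0 hcu hc3
  · rcases hw4 with rfl | ⟨-, rfl⟩
    · exact not_both 1 0 4 hcu hc4
    · exact not_both 2 0 1 hcu hc4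
  · rcases hw3 with rfl | ⟨-, rfl⟩
    · exact not_both 0 1 3 hcu hc3
    · exact not_both 2 1 0 hcu hc3

theorem unitIntervalGraph_eq_bullGraph : unitIntervalGraph ![0, 2, 1, -2, 4] = bullGraph := by
  ext u v
  fin_cases u <;> fin_cases v <;> norm_num [unitIntervalGraph, bullGraph, abs_le] <;> decide

theorem stmt15 :
    (∃ x : Fin 5 → ℝ, Nonempty (unitIntervalGraph x ≃g bullGraph)) ∧
    (∃ x : Fin 5 → ℝ, ¬ HasCFColoring (unitIntervalGraph x) 1) := by
  have h := bullGraph_not_hasCFColoring_one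
  rw [← unitIntervalGraph_eq_bullGraph] at h ⊢
  exact ⟨⟨_, ⟨.refl⟩⟩, ⟨_, h⟩⟩
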